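/- Every factor of length n of the sequence (T_n mod 5)_{n≥0} appears in its prefix of length 121n: for all n ≥ 1 and all j ≥ 0, there exists i with i + n ≤ 121n such that T_{i+t} ≡ T_{j+t} (mod 5) for all 0 ≤ t < n. -/

import Mathlib

/-
Over `ZMod p`, `T q` is the coefficient of `X ^ q` in `(1 + X + X ^ 2) ^ q`, and
`f ^ p ^ k = f (X ^ p ^ k)`; since `(1 + X + X ^ 2) ^ b` has degree `2 b`, this gives the Lucas
property `T (a p ^ k + b) ≡ T a * T b` for `b < p ^ k`. For `p = 5` the digits `T 0, …, T 4` are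
units mod 5, so every `T q` is, and a finite computation shows that every pair of units mod 5
already occurs as `(T a, T (a + 1))` with `a < 24`. Given `n`, let `N` be the power of 5 with
`n < N ≤ 5 n` and write `j = q N + r`. A factor of length `n` at `j` lies in the blocks `q` and
`q + 1` of length `N`, on which the sequence is `T q` resp. `T (q + 1)` times a fixed block; so it
reappears at `a N + r` for the `a < 24` with `(T a, T (a + 1)) ≡ (T q, T (q + 1))`, and
`a N + r + n < 24 N + n ≤ 121 n`.
-/

def trinomial (n : ℕ) : ℕ :=
  ∑ k ∈ Finset.range (n + 1), n.choose (2 * k) * (2 * k).choose k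

open Finset
open Polynomial hiding trinomial

theorem Nat.choose_two_mul_mul_choose (n k : ℕ) :
    n.choose (2 * k) * (2 * k).choose k = n.choose k * (n - k).choose k := by
  rw [Nat.choose_mul (by omega : k ≤ 2 * k), show 2 * k - k = k by omega]

theorem coeff_one_add_X_add_X_sq_pow_self (R : Type*) [CommSemiring R] (n : ℕ) :
    ((1 + X + X ^ 2 : R[X]) ^ n).coeff n = trinomial n := by
  rw [show (1 + X + X ^ 2 : R[X]) = X ^ 2 + (1 + X) by ring, add_pow, finsetSum_coeff,
    trinomial, Nat.cast_sum]
  refine sum_congr rfl fun k _ => ?_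
  rw [← pow_mul, ← C_eq_natCast, coeff_mul_C, mul_comm, coeff_X_pow_mul',
    Nat.choose_two_mul_mul_choose]
  split_ifs with h
  · rw [coeff_one_add_X_pow, Nat.choose_symm_of_eq_add (show n - k = (n - 2 * k) + k by omega)]
    push_cast; ring
  · rw [Nat.choose_eq_zero_of_lt (by omega : n - k < k)]
    simp

theorem coeff_expand_mul_of_natDegree_lt {R : Type*} [CommSemiring R] {N b : ℕ} (hb : b < N)
    (f g : R[X]) (hg : g.natDegree < N + b) (a : ℕ) :
    (expand R N f * g).coeff (a * N + b) = f.coeff a * g.coeff b := by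
  have hN : 0 < N := by omega
  rw [coeff_mul, sum_eq_single (a * N, b), coeff_expand hN, if_pos (dvd_mul_left N a),
    Nat.mul_div_cancel a hN]
  · rintro ⟨x, y⟩ hxy hne
    rw [HasAntidiagonal.mem_antidiagonal] at hxy
    dsimp only at hxy ⊢
    rw [coeff_expand hN]
    split_ifs with hdvd
    · obtain ⟨c, rfl⟩ := hdvd
      rw [mul_comm N c] at hxy hne
      rcases lt_trichotomy c a with hc | rfl | hc
      · have : (c + 1) * N ≤ a * N := Nat.mul_le_mul_right N hc
        rw [coeff_eq_zero_of_natDegree_lt (p := g) (by rw [add_mul] at this; omega), mul_zero]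
      · exact absurd (by rw [Nat.add_left_cancel hxy]) hne
      · have : (a + 1) * N ≤ c * N := Nat.mul_le_mul_right N hc
        rw [add_mul] at this
        omega
    · rw [zero_mul]
  · simp

theorem ZMod.expand_prime_pow {p : ℕ} [Fact p.Prime] (f : (ZMod p)[X]) (k : ℕ) :
    expand (ZMod p) (p ^ k) f = f ^ p ^ k := by
  induction k with
  | zero => simp
  | succ k ih => rw [pow_succ, pow_mul, ← ih, ← ZMod.expand_card, ← expand_mul, mul_comm]

theorem trinomial_mul_prime_pow_add {p : ℕ} [Fact p.Prime] {k b : ℕ} (hb : b < p ^ k)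
    (a : ℕ) : (trinomial (a * p ^ k + b) : ZMod p) = trinomial a * trinomial b := by
  have hdeg : ((1 + X + X ^ 2 : (ZMod p)[X]) ^ b).natDegree < p ^ k + b := by
    refine natDegree_pow_le.trans_lt ?_
    have : (1 + X + X ^ 2 : (ZMod p)[X]).natDegree ≤ 2 := by compute_degree
    nlinarith
  rw [← coeff_one_add_X_add_X_sq_pow_self, ← coeff_one_add_X_add_X_sq_pow_self,
    ← coeff_one_add_X_add_X_sq_pow_self, pow_add, pow_mul, ← ZMod.expand_prime_pow,
    coeff_expand_mul_of_natDegree_lt hb _ _ hdeg]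

theorem trinomial_cast_ne_zero {p : ℕ} [Fact p.Prime]
    (hdigit : ∀ d < p, (trinomial d : ZMod p) ≠ 0) (q : ℕ) :
    (trinomial q : ZMod p) ≠ 0 := by
  have hp := (Fact.out : p.Prime).one_lt
  induction q using Nat.strong_induction_on with
  | _ q ih =>
  rcases Nat.lt_or_ge q p with hq | hq
  · exact hdigit q hq
  · have hlast := Nat.mod_lt q (by omega : 0 < p)
    have hsplit := trinomial_mul_prime_pow_add (k := 1) (by rwa [pow_one]) (q / p)
    rw [pow_one, Nat.div_add_mod'] at hsplit
    rw [hsplit]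
    exact mul_ne_zero (ih _ (Nat.div_lt_self (by omega) hp)) (hdigit _ hlast)

instance Nat.fact_prime_five : Fact (Nat.Prime 5) := ⟨by norm_num⟩

theorem exists_lt_24_trinomial_eq_and_succ_eq (q : ℕ) :
    ∃ a < 24, (trinomial a : ZMod 5) = trinomial q ∧
      (trinomial (a + 1) : ZMod 5) = trinomial (q + 1) := by
  have hne : ∀ m, (trinomial m : ZMod 5) ≠ 0 := trinomial_cast_ne_zero (by decide +kernel)
  have hall : ∀ x y : ZMod 5, x ≠ 0 → y ≠ 0 →
      ∃ a < 24, (trinomial a : ZMod 5) = x ∧ (trinomial (a + 1) : ZMod 5) = y := by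
    decide +kernel
  exact hall _ _ (hne q) (hne (q + 1))

theorem apply_mul_add_eq_of_apply_eq_of_apply_succ_eq {M : Type*} [Mul M] {u : ℕ → M} {N : ℕ}
    (hu : ∀ a b, b < N → u (a * N + b) = u a * u b) {a q : ℕ} (h₀ : u a = u q)
    (h₁ : u (a + 1) = u (q + 1)) {s : ℕ} (hs : s < 2 * N) : u (a * N + s) = u (q * N + s) := by
  rcases Nat.lt_or_ge s N with hsN | hsN
  · rw [hu a s hsN, hu q s hsN, h₀]
  · have hsplit : ∀ c, c * N + s = (c + 1) * N + (s - N) := fun c => by rw [add_mul]; omega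
    rw [hsplit, hsplit, hu _ _ (by omega), hu _ _ (by omega), h₁]

theorem trinomial_mod_five_appears_in_prefix :
    ∀ n : ℕ, 1 ≤ n → ∀ j : ℕ, ∃ i : ℕ, i + n ≤ 121 * n ∧
      ∀ t < n, trinomial (i + t) % 5 = trinomial (j + t) % 5 := by
  intro n hn j
  set N := 5 ^ (Nat.log 5 n + 1) with hNdef
  have hnN : n < N := Nat.lt_pow_succ_log_self (by norm_num) n
  have hN : N ≤ 5 * n := by
    rw [hNdef, pow_succ, mul_comm]
    exact Nat.mul_le_mul_left 5 (Nat.pow_log_le_self 5 (by omega))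
  have hjN := Nat.mod_lt j (by omega : 0 < N)
  obtain ⟨a, ha, h₀, h₁⟩ := exists_lt_24_trinomial_eq_and_succ_eq (j / N)
  refine ⟨a * N + j % N, ?_, fun t ht => ?_⟩
  · have := Nat.mul_le_mul_right N (by omega : a ≤ 23)
    omega
  · have hwindow := apply_mul_add_eq_of_apply_eq_of_apply_succ_eq
      (u := fun m => (trinomial m : ZMod 5)) (N := N)
      (fun a b hb => trinomial_mul_prime_pow_add hb a) h₀ h₁ (s := j % N + t) (by omega)
    rw [← ZMod.natCast_eq_natCast_iff', add_assoc, hwindow, ← add_assoc, Nat.div_add_mod']
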